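/- arXiv:2203.16935 — 2 statements merged into one kernel-verified Lean document; each statement's English description precedes it below -/
import Mathlib

section
/- Let X be a random vector in ℝⁿ supported in the ball B(c_Y, r_Y) whose density p satisfies p(x) ≤ A / V_n(B(c_Y, r_Y)) for some constant A > 0. Then for any fixed unit vector u ∈ ℝⁿ and any δ ∈ (0,1), the probability that |⟨u, X − c_Y⟩| > δ r_Y is at most 2A(1 − δ²)^{n/2}. -/
/-! Inside `B(c, r)`, the set where `|⟪u, x - c⟫| > δ r` is covered, by Pythagoras, by the two
balls of radius `r √(1 - δ²)` centred at `c ± δ r u`. Each has volume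
`(1 - δ²)^{n/2} V_n(B(c, r))`, while the density is at most `A / V_n(B(c, r))` and vanishes off
`B(c, r)`. -/

open MeasureTheory Metric Module
open scoped RealInnerProductSpace ENNReal

section Geometry

variable {E : Type*} [NormedAddCommGroup E] [InnerProductSpace ℝ E]

theorem norm_sub_smul_sq_le_of_le_inner {a u : E} {r t : ℝ} (ha : ‖a‖ ≤ r) (hu : ‖u‖ = 1)
    (ht : 0 ≤ t) (hta : t ≤ ⟪u, a⟫) : ‖a - t • u‖ ^ 2 ≤ r ^ 2 - t ^ 2 := by
  have hexpand : ‖a - t • u‖ ^ 2 = ‖a‖ ^ 2 - 2 * t * ⟪u, a⟫ + t ^ 2 := by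
    rw [norm_sub_sq_real, real_inner_smul_right, real_inner_comm, norm_smul, hu,
      Real.norm_of_nonneg ht]
    ring
  nlinarith [norm_nonneg a]

theorem mem_closedBall_add_smul_of_le_inner {c x u : E} {r t : ℝ} (hx : x ∈ closedBall c r)
    (hu : ‖u‖ = 1) (ht : 0 ≤ t) (htx : t ≤ ⟪u, x - c⟫) :
    x ∈ closedBall (c + t • u) √(r ^ 2 - t ^ 2) := by
  rw [mem_closedBall, dist_eq_norm, ← sub_sub]
  exact Real.le_sqrt_of_sq_le <|
    norm_sub_smul_sq_le_of_le_inner (mem_closedBall_iff_norm.mp hx) hu ht htx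

theorem abs_inner_gt_inter_closedBall_subset {c u : E} {r t : ℝ} (hu : ‖u‖ = 1) (ht : 0 ≤ t) :
    {x | t < |⟪u, x - c⟫|} ∩ closedBall c r ⊆
      closedBall (c + t • u) √(r ^ 2 - t ^ 2) ∪ closedBall (c - t • u) √(r ^ 2 - t ^ 2) := by
  rintro x ⟨hxt : t < |⟪u, x - c⟫|, hx⟩
  rcases lt_abs.mp hxt with hpos | hneg
  · exact Or.inl (mem_closedBall_add_smul_of_le_inner hx hu ht hpos.le)
  · have hmem := mem_closedBall_add_smul_of_le_inner hx (u := -u) (by rw [norm_neg, hu]) ht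
      (by rw [inner_neg_left]; linarith)
    rw [smul_neg, ← sub_eq_add_neg] at hmem
    exact Or.inr hmem

variable [FiniteDimensional ℝ E] [MeasurableSpace E] [BorelSpace E]

theorem addHaar_abs_inner_gt_inter_closedBall_le (μ : Measure E) [μ.IsAddHaarMeasure]
    {c u : E} {r δ : ℝ} (hu : ‖u‖ = 1) (hr : 0 ≤ r) (hδ : 0 ≤ δ) :
    μ ({x | δ * r < |⟪u, x - c⟫|} ∩ closedBall c r) ≤
      2 * ENNReal.ofReal (√(1 - δ ^ 2) ^ finrank ℝ E) * μ (closedBall c r) := by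
  have hradius : √(r ^ 2 - (δ * r) ^ 2) = √(1 - δ ^ 2) * r := by
    rw [show r ^ 2 - (δ * r) ^ 2 = (1 - δ ^ 2) * r ^ 2 by ring,
      Real.sqrt_mul' _ (sq_nonneg r), Real.sqrt_sq hr]
  have hball (c' : E) : μ (closedBall c' (√(1 - δ ^ 2) * r)) =
      ENNReal.ofReal (√(1 - δ ^ 2) ^ finrank ℝ E) * μ (closedBall c r) := by
    rw [Measure.addHaar_closedBall_mul μ c' (Real.sqrt_nonneg _) hr, Measure.addHaar_closedBall_center μ c]
  calc μ ({x | δ * r < |⟪u, x - c⟫|} ∩ closedBall c r)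
      ≤ μ (closedBall (c + (δ * r) • u) (√(1 - δ ^ 2) * r) ∪
          closedBall (c - (δ * r) • u) (√(1 - δ ^ 2) * r)) :=
        measure_mono (hradius ▸ abs_inner_gt_inter_closedBall_subset hu (mul_nonneg hδ hr))
    _ ≤ μ (closedBall (c + (δ * r) • u) (√(1 - δ ^ 2) * r)) +
          μ (closedBall (c - (δ * r) • u) (√(1 - δ ^ 2) * r)) := measure_union_le _ _
    _ = 2 * ENNReal.ofReal (√(1 - δ ^ 2) ^ finrank ℝ E) * μ (closedBall c r) := by
        rw [hball, hball, two_mul, add_mul]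

end Geometry

theorem withDensity_apply_le_mul_measure_inter {α : Type*} [MeasurableSpace α] {ν : Measure α}
    [SFinite ν] {p : α → ℝ≥0∞} {B : Set α} {C : ℝ≥0∞} (hB : MeasurableSet B)
    (hp : ∀ x, p x ≤ C) (hsupp : ∀ x, x ∉ B → p x = 0) (S : Set α) :
    ν.withDensity p S ≤ C * ν (S ∩ B) := by
  have hle : p ≤ B.indicator fun _ ↦ C := fun x ↦ by
    by_cases hx : x ∈ B <;> simp [hx, hp, hsupp]
  calc ν.withDensity p S ≤ ν.withDensity (B.indicator fun _ ↦ C) S :=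
        withDensity_mono (Filter.Eventually.of_forall hle) S
    _ = C * ν (S ∩ B) := by
        rw [withDensity_indicator hB, withDensity_const, Measure.smul_apply,
          Measure.restrict_apply' hB, smul_eq_mul]

theorem slab_probability_bound_general (n : ℕ) (cY : EuclideanSpace ℝ (Fin n))
    (rY A : ℝ) (hr : 0 < rY)
    (p : EuclideanSpace ℝ (Fin n) → ℝ≥0∞)
    (μ : Measure (EuclideanSpace ℝ (Fin n)))
    (hμ : μ = volume.withDensity p)
    (hsupp : ∀ x, x ∉ Metric.closedBall cY rY → p x = 0)
    (hbound : ∀ x, p x ≤ ENNReal.ofReal A / volume (Metric.closedBall cY rY))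
    (u : EuclideanSpace ℝ (Fin n)) (hu : ‖u‖ = 1)
    (δ : ℝ) (hδ : δ ∈ Set.Ioo (0 : ℝ) 1) :
    μ {x | |⟪u, x - cY⟫| > δ * rY}
      ≤ ENNReal.ofReal (2 * A * Real.sqrt (1 - δ ^ 2) ^ n) := by
  set V := volume (closedBall cY rY)
  have hV0 : V ≠ 0 := (measure_closedBall_pos volume cY hr).ne'
  have hVtop : V ≠ ∞ := measure_closedBall_lt_top.ne
  have hslab := addHaar_abs_inner_gt_inter_closedBall_le volume (c := cY) hu hr.le hδ.1.le
  rw [finrank_euclideanSpace_fin] at hslab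
  calc μ {x | |⟪u, x - cY⟫| > δ * rY}
      ≤ ENNReal.ofReal A / V * volume ({x | |⟪u, x - cY⟫| > δ * rY} ∩ closedBall cY rY) :=
        hμ ▸ withDensity_apply_le_mul_measure_inter measurableSet_closedBall hbound hsupp _
    _ ≤ ENNReal.ofReal A / V * (2 * ENNReal.ofReal (√(1 - δ ^ 2) ^ n) * V) := by gcongr
    _ = ENNReal.ofReal A / V * V * (2 * ENNReal.ofReal (√(1 - δ ^ 2) ^ n)) := by ring
    _ = ENNReal.ofReal (2 * A * √(1 - δ ^ 2) ^ n) := by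
        rw [ENNReal.div_mul_cancel hV0 hVtop, ENNReal.ofReal_mul' (by positivity),
          ENNReal.ofReal_mul zero_le_two, ENNReal.ofReal_ofNat]
        ring

theorem slab_probability_bound (n : ℕ) (cY : EuclideanSpace ℝ (Fin n))
    (rY A : ℝ) (hr : 0 < rY) (hA : 0 < A)
    (p : EuclideanSpace ℝ (Fin n) → ℝ≥0∞)
    (μ : Measure (EuclideanSpace ℝ (Fin n)))
    (hμ : μ = volume.withDensity p) [IsProbabilityMeasure μ]
    (hsupp : ∀ x, x ∉ Metric.closedBall cY rY → p x = 0)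
    (hbound : ∀ x, p x ≤ ENNReal.ofReal A / volume (Metric.closedBall cY rY))
    (u : EuclideanSpace ℝ (Fin n)) (hu : ‖u‖ = 1)
    (δ : ℝ) (hδ : δ ∈ Set.Ioo (0 : ℝ) 1) :
    μ {x | |⟪u, x - cY⟫| > δ * rY}
      ≤ ENNReal.ofReal (2 * A * Real.sqrt (1 - δ ^ 2) ^ n) :=
  slab_probability_bound_general n cY rY A hr p μ hμ hsupp hbound u hu δ hδ
end

section
/- Let x₁, ..., x_k be i.i.d. random vectors in ℝⁿ supported in B(c_Y, r_Y) with density ≤ A_Y / V_n(B(c_Y, r_Y)), and let X be an independent random vector in ℝⁿ supported in B(0, r_X) with density ≤ A_X / V_n(B(0, r_X)). Let x̄ = (1/k)Σᵢ xᵢ, and define the classifier g(x) = 1 if (1/k)Σᵢ ⟨xᵢ, x⟩ ≥ θ‖x̄‖ and g(x) = 0 otherwise, for θ ∈ (0, r_X). Then P(g(X) = 1 | x̄ ≠ 0) ≤ A_X (1 − θ²/r_X²)^{n/2}. -/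
/-!
For a fixed nonzero mean `v = x̄`, the event is the half-space `⟪v / ‖v‖, X⟫ ≥ θ`. Its
intersection with `B(0, r_X)` is a spherical cap, which lies in the ball of radius
`√(r_X² - θ²)` around `θ v / ‖v‖`; the density bound on `X` then gives probability at most
`A_X (√(r_X² - θ²) / r_X)ⁿ = A_X (1 - θ² / r_X²)^{n/2}`. Since `x̄ ≠ 0` is an event of the
first coordinate of the product space, integrating this slice bound (Fubini) bounds the
conditional probability.
-/

open MeasureTheory ProbabilityTheory Metric Module
open scoped RealInnerProductSpace ENNReal

theorem withDensity_apply_le_mul_inter {α : Type*} [MeasurableSpace α] {μ : Measure α}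
    {f : α → ℝ≥0∞} {t : Set α} (ht : MeasurableSet t) {c : ℝ≥0∞} (hf : f ≤ t.indicator fun _ ↦ c)
    (s : Set α) : μ.withDensity f s ≤ c * μ (s ∩ t) :=
  calc μ.withDensity f s ≤ μ.withDensity (t.indicator fun _ ↦ c) s :=
        withDensity_mono (Filter.Eventually.of_forall hf) s
    _ = c * μ (s ∩ t) := by
        rw [withDensity_indicator ht, withDensity_const, Measure.smul_apply,
          Measure.restrict_apply' ht, smul_eq_mul]

theorem cond_prod_preimage_fst_le {α β : Type*} [MeasurableSpace α] [MeasurableSpace β]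
    (μ : Measure α) (ν : Measure β) [IsProbabilityMeasure ν] {s : Set α} (hs : MeasurableSet s)
    {t : Set (α × β)} (ht : MeasurableSet t) {c : ℝ≥0∞} (h : ∀ a ∈ s, ν (Prod.mk a ⁻¹' t) ≤ c) :
    (μ.prod ν)[t | Prod.fst ⁻¹' s] ≤ c := by
  have hs' : MeasurableSet (Prod.fst ⁻¹' s : Set (α × β)) := measurable_fst hs
  have hslice : ∀ a, ν (Prod.mk a ⁻¹' (Prod.fst ⁻¹' s ∩ t)) ≤ s.indicator (fun _ ↦ c) a := by
    intro a
    by_cases ha : a ∈ s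
    · rw [Set.indicator_of_mem ha]
      exact (measure_mono fun b hb ↦ hb.2).trans (h a ha)
    · rw [Set.indicator_of_notMem ha, nonpos_iff_eq_zero]
      exact measure_mono_null (fun b hb ↦ ha hb.1) measure_empty
  calc (μ.prod ν)[t | Prod.fst ⁻¹' s]
      = (μ s)⁻¹ * (μ.prod ν) (Prod.fst ⁻¹' s ∩ t) := by
        rw [cond_apply hs', ← Set.prod_univ, Measure.prod_prod, measure_univ, mul_one,
          Set.prod_univ]
    _ ≤ (μ s)⁻¹ * (c * μ s) := by
        gcongr
        rw [Measure.prod_apply (hs'.inter ht), ← lintegral_indicator_const hs]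
        exact lintegral_mono hslice
    _ ≤ c := by
        rw [mul_left_comm]
        exact mul_le_of_le_one_right' (ENNReal.inv_mul_le_one _)

section Volume

variable {E : Type*} [NormedAddCommGroup E] [NormedSpace ℝ E] [FiniteDimensional ℝ E]
  [MeasurableSpace E] [BorelSpace E] (μ : Measure E) [μ.IsAddHaarMeasure]

theorem addHaar_closedBall_div_addHaar_closedBall (x y : E) {r s : ℝ} (hr : 0 < r) (hs : 0 ≤ s) :
    μ (closedBall x s) / μ (closedBall y r) = ENNReal.ofReal ((s / r) ^ finrank ℝ E) := by
  rw [Measure.addHaar_closedBall μ x hs, Measure.addHaar_closedBall μ y hr.le,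
    ENNReal.mul_div_mul_right _ _ (measure_ball_pos μ 0 one_pos).ne' measure_ball_lt_top.ne,
    ← ENNReal.ofReal_div_of_pos (pow_pos hr _), div_pow]

end Volume

section InnerProduct

variable {E : Type*} [NormedAddCommGroup E] [InnerProductSpace ℝ E]

theorem setOf_inner_ge_inter_closedBall_subset {v : E} (hv : v ≠ 0) {θ : ℝ} (hθ : 0 ≤ θ)
    (r : ℝ) :
    {x | θ * ‖v‖ ≤ ⟪v, x⟫} ∩ closedBall 0 r ⊆ closedBall ((θ / ‖v‖) • v) √(r ^ 2 - θ ^ 2) := by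
  rintro x ⟨hx, hxr⟩
  have hv' : 0 < ‖v‖ := norm_pos_iff.mpr hv
  rw [mem_closedBall_zero_iff] at hxr
  rw [mem_closedBall, dist_eq_norm, ← abs_norm]
  apply Real.abs_le_sqrt
  rw [norm_sub_sq_real, norm_smul, real_inner_smul_right, real_inner_comm, Real.norm_eq_abs,
    abs_div, abs_of_nonneg hθ, abs_norm, div_mul_cancel₀ _ hv'.ne']
  have hθx : θ * θ ≤ θ / ‖v‖ * ⟪v, x⟫ := by
    rw [div_mul_eq_mul_div, le_div_iff₀ hv', mul_assoc]
    exact mul_le_mul_of_nonneg_left hx hθ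
  nlinarith [norm_nonneg x]

theorem withDensity_setOf_inner_ge_le [FiniteDimensional ℝ E] [MeasurableSpace E] [BorelSpace E]
    (μ : Measure E) [μ.IsAddHaarMeasure] {p : E → ℝ≥0∞} {r A θ : ℝ} (hr : 0 < r) (hθ : 0 ≤ θ)
    (hsupp : ∀ x ∉ closedBall 0 r, p x = 0)
    (hbound : ∀ x, p x ≤ ENNReal.ofReal A / μ (closedBall 0 r)) {v : E} (hv : v ≠ 0) :
    μ.withDensity p {x | θ * ‖v‖ ≤ ⟪v, x⟫} ≤
      ENNReal.ofReal (A * √(1 - θ ^ 2 / r ^ 2) ^ finrank ℝ E) := by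
  set B := closedBall (0 : E) r
  have hp : p ≤ B.indicator fun _ ↦ ENNReal.ofReal A / μ B := fun x ↦ by
    by_cases hx : x ∈ B
    · simpa [hx] using hbound x
    · simp [hx, hsupp x hx]
  have hratio : √(r ^ 2 - θ ^ 2) / r = √(1 - θ ^ 2 / r ^ 2) := by
    rw [one_sub_div (pow_ne_zero 2 hr.ne'), Real.sqrt_div' _ (sq_nonneg r), Real.sqrt_sq hr.le]
  calc μ.withDensity p {x | θ * ‖v‖ ≤ ⟪v, x⟫}
      ≤ ENNReal.ofReal A / μ B * μ ({x | θ * ‖v‖ ≤ ⟪v, x⟫} ∩ B) :=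
        withDensity_apply_le_mul_inter isClosed_closedBall.measurableSet hp _
    _ ≤ ENNReal.ofReal A / μ B * μ (closedBall ((θ / ‖v‖) • v) √(r ^ 2 - θ ^ 2)) := by
        gcongr
        exact setOf_inner_ge_inter_closedBall_subset hv hθ r
    _ = ENNReal.ofReal A * (μ (closedBall ((θ / ‖v‖) • v) √(r ^ 2 - θ ^ 2)) / μ B) := by
        rw [← ENNReal.mul_div_right_comm, mul_div_assoc]
    _ = ENNReal.ofReal (A * √(1 - θ ^ 2 / r ^ 2) ^ finrank ℝ E) := by
        rw [addHaar_closedBall_div_addHaar_closedBall μ _ _ hr (Real.sqrt_nonneg _), hratio,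
          ENNReal.ofReal_mul' (by positivity)]

end InnerProduct

theorem few_shot_false_positive_general (n k : ℕ)
    (rX AX : ℝ)
    (μY : Measure (EuclideanSpace ℝ (Fin n)))
    (pX : EuclideanSpace ℝ (Fin n) → ℝ≥0∞)
    (ν : Measure (EuclideanSpace ℝ (Fin n)))
    (hν : ν = volume.withDensity pX) [IsProbabilityMeasure ν]
    (hsuppX : ∀ x, x ∉ Metric.closedBall (0 : EuclideanSpace ℝ (Fin n)) rX → pX x = 0)
    (hboundX : ∀ x, pX x ≤ ENNReal.ofReal AX /
        volume (Metric.closedBall (0 : EuclideanSpace ℝ (Fin n)) rX))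
    (θ : ℝ) (hθ : θ ∈ Set.Ioo 0 rX) :
    ((Measure.pi (fun _ : Fin k => μY)).prod ν)[{q : (Fin k → EuclideanSpace ℝ (Fin n)) × EuclideanSpace ℝ (Fin n) |
          (1 / (k : ℝ)) * ∑ i, ⟪q.1 i, q.2⟫ ≥ θ * ‖(1 / (k : ℝ)) • ∑ i, q.1 i‖}
       | {q : (Fin k → EuclideanSpace ℝ (Fin n)) × EuclideanSpace ℝ (Fin n) |
          (1 / (k : ℝ)) • ∑ i, q.1 i ≠ 0}]
      ≤ ENNReal.ofReal (AX * Real.sqrt (1 - θ ^ 2 / rX ^ 2) ^ n) := by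
  obtain ⟨hθ0, hθr⟩ := hθ
  subst hν
  set mean : (Fin k → EuclideanSpace ℝ (Fin n)) → EuclideanSpace ℝ (Fin n) :=
    fun ω ↦ (1 / (k : ℝ)) • ∑ i, ω i
  have hmean : Continuous mean := by fun_prop
  refine cond_prod_preimage_fst_le _ _ (s := {ω | mean ω ≠ 0})
    ((measurableSet_singleton 0).compl.preimage hmean.measurable)
    (measurableSet_le (by fun_prop) (by fun_prop)) fun ω hω ↦ ?_
  have hslice : Prod.mk ω ⁻¹' {q | (1 / (k : ℝ)) * ∑ i, ⟪q.1 i, q.2⟫ ≥ θ * ‖mean q.1‖} =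
      {x | θ * ‖mean ω‖ ≤ ⟪mean ω, x⟫} := by
    ext x
    simp [mean, real_inner_smul_left, sum_inner]
  rw [hslice]
  simpa only [finrank_euclideanSpace_fin] using
    withDensity_setOf_inner_ge_le volume (hθ0.trans hθr) hθ0.le hsuppX hboundX hω

theorem few_shot_false_positive (n k : ℕ) (hk : 0 < k)
    (cY : EuclideanSpace ℝ (Fin n)) (rY AY rX AX : ℝ)
    (hrY : 0 < rY) (hAY : 0 < AY) (hrX : 0 < rX) (hAX : 0 < AX)
    (pY : EuclideanSpace ℝ (Fin n) → ℝ≥0∞)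
    (μY : Measure (EuclideanSpace ℝ (Fin n)))
    (hμY : μY = volume.withDensity pY) [IsProbabilityMeasure μY]
    (hsuppY : ∀ x, x ∉ Metric.closedBall cY rY → pY x = 0)
    (hboundY : ∀ x, pY x ≤ ENNReal.ofReal AY / volume (Metric.closedBall cY rY))
    (pX : EuclideanSpace ℝ (Fin n) → ℝ≥0∞)
    (ν : Measure (EuclideanSpace ℝ (Fin n)))
    (hν : ν = volume.withDensity pX) [IsProbabilityMeasure ν]
    (hsuppX : ∀ x, x ∉ Metric.closedBall (0 : EuclideanSpace ℝ (Fin n)) rX → pX x = 0)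
    (hboundX : ∀ x, pX x ≤ ENNReal.ofReal AX /
        volume (Metric.closedBall (0 : EuclideanSpace ℝ (Fin n)) rX))
    (θ : ℝ) (hθ : θ ∈ Set.Ioo 0 rX) :
    ((Measure.pi (fun _ : Fin k => μY)).prod ν)[{q : (Fin k → EuclideanSpace ℝ (Fin n)) × EuclideanSpace ℝ (Fin n) |
          (1 / (k : ℝ)) * ∑ i, ⟪q.1 i, q.2⟫ ≥ θ * ‖(1 / (k : ℝ)) • ∑ i, q.1 i‖}
       | {q : (Fin k → EuclideanSpace ℝ (Fin n)) × EuclideanSpace ℝ (Fin n) |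
          (1 / (k : ℝ)) • ∑ i, q.1 i ≠ 0}]
      ≤ ENNReal.ofReal (AX * Real.sqrt (1 - θ ^ 2 / rX ^ 2) ^ n) :=
  few_shot_false_positive_general n k rX AX μY pX ν hν hsuppX hboundX θ hθ
end
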